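/- arXiv:2605.23821 — 4 statements merged into one kernel-verified Lean document; each statement's English description precedes it below -/
import Mathlib

section
/- The collection of all scaling modes φ_0,...,φ_L together with all wavelet modes ψ_{u,r} (over internal nodes u and relative depths 1 ≤ r ≤ h(u)) forms an orthonormal basis of the space of real-valued functions on the nodes of the full binary tree of depth L. -/
/-- Nodes of the full (perfect) binary tree of depth `L`: a node is a depth `ℓ ≤ L`
together with an index among the `2^ℓ` nodes at that depth.  The children of node
`(ℓ, k)` are `(ℓ+1, 2k)` and `(ℓ+1, 2k+1)`. -/
abbrev BTNode (L : ℕ) := Σ ℓ : Fin (L + 1), Fin (2 ^ (ℓ : ℕ))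

namespace BTNode

variable {L : ℕ}

/-- Depth of a node. -/
def depth (n : BTNode L) : ℕ := n.1

/-- Index (among the `2^a` nodes at depth `a`) of the ancestor of `n` at depth
`a ≤ depth n`. -/
def anc (n : BTNode L) (a : ℕ) : ℕ := (n.2 : ℕ) / 2 ^ (depth n - a)

/-- Depth of the lowest common ancestor of two nodes. -/
def lcaDepth (i j : BTNode L) : ℕ :=
  Nat.findGreatest (fun a => anc i a = anc j a) (min (depth i) (depth j))

/-- Graph distance on the tree: `dist i j = depth i + depth j - 2·depth(LCA)`. -/
def dist (i j : BTNode L) : ℕ := depth i + depth j - 2 * lcaDepth i j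

/-- `i` is an ancestor of (or equal to) `j`. -/
def IsAncestor (i j : BTNode L) : Prop :=
  depth i ≤ depth j ∧ anc j (depth i) = (i.2 : ℕ)

/-- `n` lies in the subtree `T(u)` rooted at `u`. -/
def InSubtree (u n : BTNode L) : Prop := IsAncestor u n

/-- Scaling mode `φ_ℓ`: normalized indicator of the depth-`ℓ` layer, with value
`2^{-ℓ/2}` on that layer. -/
noncomputable def scalingMode (ℓ : Fin (L + 1)) (n : BTNode L) : ℝ :=
  if depth n = (ℓ : ℕ) then ((Real.sqrt 2)⁻¹) ^ (ℓ : ℕ) else 0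

/-- Haar wavelet mode `ψ_{u,r}`: supported on the descendants of `u` at relative depth
`r`, with value `+2^{-r/2}` below the first child of `u` (even child index) and
`-2^{-r/2}` below the second child (odd child index). -/
noncomputable def waveletMode (u : BTNode L) (r : ℕ) (n : BTNode L) : ℝ :=
  if depth n = depth u + r ∧ anc n (depth u) = (u.2 : ℕ) then
    (if anc n (depth u + 1) % 2 = 0 then 1 else -1) * ((Real.sqrt 2)⁻¹) ^ r
  else 0

end BTNode

/-- Index type for the Haar modes: either a scaling level `ℓ ∈ {0,…,L}` or a pair
`(u, r)` of an internal node `u` (depth `< L`) and a relative depth `1 ≤ r ≤ h(u)`. -/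
def HaarIdx (L : ℕ) :=
  Fin (L + 1) ⊕
    {p : BTNode L × ℕ // BTNode.depth p.1 < L ∧ 1 ≤ p.2 ∧ p.2 ≤ L - BTNode.depth p.1}

/-- The Haar mode family, viewed in the Euclidean space of real functions on the nodes. -/
noncomputable def haarMode (L : ℕ) : HaarIdx L → EuclideanSpace ℝ (BTNode L) :=
  fun i => match i with
    | Sum.inl ℓ => WithLp.toLp 2 (fun n => BTNode.scalingMode ℓ n)
    | Sum.inr p => WithLp.toLp 2 (fun n => BTNode.waveletMode p.1.1 p.1.2 n)

/-!
Each Haar mode lives on a single layer of the tree. A wavelet sums to zero, and of two distinct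
modes on the same layer one is constant on the support of the other, so they are orthogonal;
the norms come from counting the nodes of a support. There are as many modes as nodes, so the
orthonormal family spans.
-/

open Finset

lemma Nat.card_filter_range_div_eq {N c m : ℕ} (hc : 0 < c) (hm : m < N) :
    #{k ∈ range (N * c) | k / c = m} = c := by
  have hmc : m * c + c ≤ N * c := by nlinarith
  rw [show {k ∈ range (N * c) | k / c = m} = Ico (m * c) (m * c + c) by
    ext k
    simp only [mem_filter, mem_range, mem_Ico, Nat.div_eq_iff hc]
    omega]
  simp

lemma Nat.sum_range_two_pow_mul_sub_add (n : ℕ) :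
    ∑ ℓ ∈ range (n + 1), 2 ^ ℓ * (n - ℓ) + (n + 1) = ∑ ℓ ∈ range (n + 1), 2 ^ ℓ := by
  induction n with
  | zero => simp
  | succ n ih =>
    have hstep : ∑ ℓ ∈ range (n + 1), 2 ^ ℓ * (n + 1 - ℓ) =
        ∑ ℓ ∈ range (n + 1), 2 ^ ℓ * (n - ℓ) + ∑ ℓ ∈ range (n + 1), 2 ^ ℓ := by
      rw [← sum_add_distrib]
      refine sum_congr rfl fun ℓ hℓ => ?_
      rw [mem_range] at hℓ
      rw [show n + 1 - ℓ = n - ℓ + 1 by omega, mul_add_one]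
    have hdouble : ∑ ℓ ∈ range (n + 1 + 1), 2 ^ ℓ = 2 * ∑ ℓ ∈ range (n + 1), 2 ^ ℓ + 1 := by
      rw [sum_range_succ', mul_sum]
      simp only [pow_succ, mul_comm, pow_zero]
    rw [sum_range_succ (fun ℓ => 2 ^ ℓ * (n + 1 - ℓ)), Nat.sub_self, mul_zero, add_zero, hstep,
      hdouble]
    omega

lemma Finset.sum_ite_eq_card_mul {ι R : Type*} [Fintype ι] [NonAssocSemiring R] (p : ι → Prop)
    [DecidablePred p] (c : R) :
    ∑ i, (if p i then c else 0) = #{i | p i} * c := by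
  rw [← sum_filter, sum_const, nsmul_eq_mul]

lemma dotProduct_eq_zero_of_sum_eq_zero {ι R : Type*} [Fintype ι] [NonUnitalNonAssocSemiring R]
    {f g : ι → R} (hg : ∑ i, g i = 0) (hf : ∀ i j, g i ≠ 0 → g j ≠ 0 → f i = f j) :
    f ⬝ᵥ g = 0 := by
  by_cases hsupp : ∃ j, g j ≠ 0
  · obtain ⟨j, hj⟩ := hsupp
    calc f ⬝ᵥ g = ∑ i, f j * g i := sum_congr rfl fun i _ => by
          by_cases hi : g i = 0
          · simp [hi]
          · rw [hf i j hi hj]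
      _ = 0 := by rw [← mul_sum, hg, mul_zero]
  · push Not at hsupp
    simp [dotProduct, hsupp]

lemma Real.inv_sqrt_two_pow_mul_self (r : ℕ) :
    (Real.sqrt 2)⁻¹ ^ r * (Real.sqrt 2)⁻¹ ^ r = (2 ^ r : ℝ)⁻¹ := by
  rw [← mul_pow, ← mul_inv, Real.mul_self_sqrt zero_le_two, inv_pow]

namespace BTNode

variable {L : ℕ}

lemma eq_of_depth_eq_of_index_eq {u v : BTNode L} (hd : depth u = depth v) (hi : (u.2 : ℕ) = v.2) :
    u = v :=
  Sigma.ext (Fin.ext hd) ((Fin.heq_ext_iff (congrArg (2 ^ ·) hd)).2 hi)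

lemma anc_eq_anc_div_pow {n : BTNode L} {a b : ℕ} (hab : a ≤ b) (hb : b ≤ depth n) :
    anc n a = anc n b / 2 ^ (b - a) := by
  rw [anc, anc, Nat.div_div_eq_div_mul, ← pow_add]
  congr 2
  omega

lemma anc_eq_of_anc_eq {n n' : BTNode L} {a b : ℕ} (hab : a ≤ b) (hb : b ≤ depth n)
    (hd : depth n = depth n') (h : anc n b = anc n' b) : anc n a = anc n' a := by
  rw [anc_eq_anc_div_pow hab hb, anc_eq_anc_div_pow hab (hd ▸ hb), h]

lemma card_filter_depth_anc {a d m : ℕ} (had : a ≤ d) (hdL : d ≤ L) (hm : m < 2 ^ a) :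
    #{n : BTNode L | depth n = d ∧ anc n a = m} = 2 ^ (d - a) := by
  rw [card_filter, Fintype.sum_sigma, sum_eq_single (⟨d, by omega⟩ : Fin (L + 1))]
  · have hsplit : 2 ^ d = 2 ^ a * 2 ^ (d - a) := by rw [← pow_add]; congr 1; omega
    simp only [depth, anc, true_and]
    rw [Fin.sum_univ_eq_sum_range (fun k => if k / 2 ^ (d - a) = m then 1 else 0), ← card_filter,
      hsplit, Nat.card_filter_range_div_eq (by positivity) hm]
  · intro ℓ _ hℓ
    exact sum_eq_zero fun k _ => if_neg fun h => hℓ (Fin.ext h.1)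
  · simp

lemma card_filter_depth_eq {d : ℕ} (hdL : d ≤ L) : #{n : BTNode L | depth n = d} = 2 ^ d := by
  have hroot : ∀ n : BTNode L, anc n 0 = 0 := fun n => Nat.div_eq_of_lt n.2.isLt
  simpa [hroot] using card_filter_depth_anc (L := L) (m := 0) (Nat.zero_le d) hdL (by positivity)

lemma waveletMode_ne_zero_iff {u : BTNode L} {r : ℕ} {n : BTNode L} :
    waveletMode u r n ≠ 0 ↔ depth n = depth u + r ∧ anc n (depth u) = u.2 := by
  unfold waveletMode
  split_ifs with h <;> simp [h]

lemma scalingMode_dotProduct_self (ℓ : Fin (L + 1)) : scalingMode ℓ ⬝ᵥ scalingMode ℓ = 1 := by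
  have hsq : ∀ n : BTNode L, scalingMode ℓ n * scalingMode ℓ n =
      if depth n = ℓ then (2 ^ (ℓ : ℕ) : ℝ)⁻¹ else 0 := fun n => by
    unfold scalingMode
    split_ifs
    · exact Real.inv_sqrt_two_pow_mul_self _
    · exact zero_mul 0
  simp only [dotProduct, hsq, sum_ite_eq_card_mul, card_filter_depth_eq (Nat.lt_succ_iff.1 ℓ.2)]
  push_cast
  exact mul_inv_cancel₀ (by positivity)

lemma waveletMode_dotProduct_self (u : BTNode L) {r : ℕ} (hr : depth u + r ≤ L) :
    waveletMode u r ⬝ᵥ waveletMode u r = 1 := by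
  have hsq : ∀ n : BTNode L, waveletMode u r n * waveletMode u r n =
      if depth n = depth u + r ∧ anc n (depth u) = u.2 then (2 ^ r : ℝ)⁻¹ else 0 := fun n => by
    unfold waveletMode
    split_ifs
    · linear_combination Real.inv_sqrt_two_pow_mul_self r
    · linear_combination Real.inv_sqrt_two_pow_mul_self r
    · exact zero_mul 0
  simp only [dotProduct, hsq, sum_ite_eq_card_mul,
    card_filter_depth_anc (Nat.le_add_right _ r) hr u.2.isLt, Nat.add_sub_cancel_left]
  push_cast
  exact mul_inv_cancel₀ (by positivity)

/-- The support of `ψ_{v,s}` splits into the subtrees of the two children of `v`, on which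
`ψ_{v,s}` takes opposite values. -/
lemma sum_waveletMode {v : BTNode L} {s : ℕ} (hs : 1 ≤ s) (hsL : depth v + s ≤ L) :
    ∑ n, waveletMode v s n = 0 := by
  have hsplit : ∀ n : BTNode L, waveletMode v s n =
      (if depth n = depth v + s ∧ anc n (depth v + 1) = 2 * v.2
        then (Real.sqrt 2)⁻¹ ^ s else 0) -
      (if depth n = depth v + s ∧ anc n (depth v + 1) = 2 * v.2 + 1
        then (Real.sqrt 2)⁻¹ ^ s else 0) := by
    intro n
    unfold waveletMode
    by_cases hn : depth n = depth v + s
    · have hanc : anc n (depth v) = anc n (depth v + 1) / 2 := by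
        rw [anc_eq_anc_div_pow (Nat.le_add_right _ 1) (by omega), Nat.add_sub_cancel_left, pow_one]
      simp only [hn, true_and]
      split_ifs <;> first | omega | simp
    · simp [hn]
  have hv : (v.2 : ℕ) < 2 ^ depth v := v.2.isLt
  simp only [hsplit, sum_sub_distrib, sum_ite_eq_card_mul,
    card_filter_depth_anc (by omega : depth v + 1 ≤ depth v + s) hsL
      (by rw [pow_succ]; omega : 2 * (v.2 : ℕ) < 2 ^ (depth v + 1)),
    card_filter_depth_anc (by omega : depth v + 1 ≤ depth v + s) hsL
      (by rw [pow_succ]; omega : 2 * (v.2 : ℕ) + 1 < 2 ^ (depth v + 1)), sub_self]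

lemma scalingMode_dotProduct_of_ne {ℓ ℓ' : Fin (L + 1)} (h : ℓ ≠ ℓ') :
    scalingMode ℓ ⬝ᵥ scalingMode ℓ' = 0 := by
  refine sum_eq_zero fun n _ => ?_
  unfold scalingMode
  split_ifs with h₁ h₂
  · exact absurd (Fin.ext (h₁.symm.trans h₂)) h
  all_goals simp

lemma scalingMode_dotProduct_waveletMode (ℓ : Fin (L + 1)) {v : BTNode L} {s : ℕ} (hs : 1 ≤ s)
    (hsL : depth v + s ≤ L) : scalingMode ℓ ⬝ᵥ waveletMode v s = 0 := by
  refine dotProduct_eq_zero_of_sum_eq_zero (sum_waveletMode hs hsL) fun n n' hn hn' => ?_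
  rw [waveletMode_ne_zero_iff] at hn hn'
  simp only [scalingMode, hn.1, hn'.1]

/-- When `depth u < depth v`, the wavelet `ψ_{u,r}` is constant on the subtree of `v`, since its
value only depends on the depth and on the ancestors at depths `depth u` and `depth u + 1`. -/
lemma waveletMode_dotProduct_waveletMode {u v : BTNode L} {r s : ℕ} (huv : depth u ≤ depth v)
    (hne : (u, r) ≠ (v, s)) (hs : 1 ≤ s) (hsL : depth v + s ≤ L) :
    waveletMode u r ⬝ᵥ waveletMode v s = 0 := by
  refine dotProduct_eq_zero_of_sum_eq_zero (sum_waveletMode hs hsL) fun n n' hn hn' => ?_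
  rw [waveletMode_ne_zero_iff] at hn hn'
  have hdepth : depth n = depth n' := hn.1.trans hn'.1.symm
  have hv : anc n (depth v) = anc n' (depth v) := hn.2.trans hn'.2.symm
  rcases huv.lt_or_eq with hlt | heq
  · have h₀ := anc_eq_of_anc_eq hlt.le (by omega) hdepth hv
    have h₁ := anc_eq_of_anc_eq hlt (by omega) hdepth hv
    simp only [waveletMode, hdepth, h₀, h₁]
  · have hzero : ∀ m, depth m = depth v + s → anc m (depth v) = v.2 → waveletMode u r m = 0 := by
      intro m hm hmv
      by_contra hum
      rw [← ne_eq, waveletMode_ne_zero_iff] at hum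
      have hrs : r = s := by omega
      have huv' : u = v := eq_of_depth_eq_of_index_eq heq (by rw [← hum.2, ← hmv, heq])
      exact hne (by rw [huv', hrs])
    rw [hzero n hn.1 hn.2, hzero n' hn'.1 hn'.2]

end BTNode

open BTNode

lemma orthonormal_haarMode (L : ℕ) : Orthonormal ℝ (haarMode L) := by
  classical
  rw [orthonormal_iff_ite]
  intro i j
  rw [EuclideanSpace.inner_eq_star_dotProduct, star_trivial, dotProduct_comm]
  split_ifs with h
  · subst h
    rcases i with ℓ | ⟨⟨u, r⟩, hu⟩
    · exact scalingMode_dotProduct_self ℓ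
    · simp only at hu
      exact waveletMode_dotProduct_self (r := r) u (by omega)
  rcases i with ℓ | ⟨⟨u, r⟩, hu⟩ <;> rcases j with ℓ' | ⟨⟨v, s⟩, hv⟩
  · exact scalingMode_dotProduct_of_ne fun e => h (congrArg Sum.inl e)
  · simp only at hv
    exact scalingMode_dotProduct_waveletMode (v := v) (s := s) ℓ hv.2.1 (by omega)
  · simp only at hu
    rw [dotProduct_comm]
    exact scalingMode_dotProduct_waveletMode (v := u) (s := r) ℓ' hu.2.1 (by omega)
  · simp only at hu hv
    have hne : (u, r) ≠ (v, s) := fun e => h (congrArg Sum.inr (Subtype.ext e))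
    rcases le_total (depth u) (depth v) with huv | hvu
    · exact waveletMode_dotProduct_waveletMode (v := v) (s := s) huv hne hv.2.1 (by omega)
    · rw [dotProduct_comm]
      exact waveletMode_dotProduct_waveletMode (v := u) (s := r) hvu hne.symm hu.2.1 (by omega)

def haarIdxEquiv (L : ℕ) :
    HaarIdx L ≃ Fin (L + 1) ⊕ Σ u : BTNode L, Icc 1 (L - depth u) :=
  Equiv.sumCongr (Equiv.refl _)
    ((Equiv.subtypeProdEquivSigmaSubtype fun u r => depth u < L ∧ 1 ≤ r ∧ r ≤ L - depth u).trans
      (Equiv.sigmaCongrRight fun u => Equiv.subtypeEquivRight fun r => by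
        simp only [mem_Icc]
        omega))

noncomputable instance (L : ℕ) : Fintype (HaarIdx L) := Fintype.ofEquiv _ (haarIdxEquiv L).symm

lemma card_haarIdx (L : ℕ) : Fintype.card (HaarIdx L) = Fintype.card (BTNode L) := by
  rw [Fintype.card_congr (haarIdxEquiv L), Fintype.card_sum, Fintype.card_fin,
    Fintype.card_sigma, Fintype.card_sigma]
  simp only [Fintype.card_coe, Nat.card_Icc, Nat.add_sub_cancel, Fintype.card_fin]
  rw [Fintype.sum_sigma]
  simp only [depth, sum_const, card_univ, Fintype.card_fin, smul_eq_mul]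
  rw [Fin.sum_univ_eq_sum_range (fun ℓ => 2 ^ ℓ * (L - ℓ)), Fin.sum_univ_eq_sum_range (2 ^ ·),
    add_comm]
  exact Nat.sum_range_two_pow_mul_sub_add L

/-- the scaling modes together with the wavelet modes form an orthonormal
basis of the space of real-valued functions on the nodes of the full binary tree of
depth `L`: they are orthonormal and they span the whole space. -/
theorem haar_modes_orthonormal_basis (L : ℕ) :
    Orthonormal ℝ (haarMode L) ∧
    Submodule.span ℝ (Set.range (haarMode L)) = ⊤ := by
  have horth := orthonormal_haarMode L
  refine ⟨horth, horth.linearIndependent.span_eq_top_of_card_eq_finrank' ?_⟩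
  rw [card_haarIdx, finrank_euclideanSpace]
end

section
/- Let M_{ij} = f(dist(i,j)) on the full binary tree of depth L. Then every split space S^u (the span of the wavelet modes ψ_{u,1},...,ψ_{u,h(u)} rooted at an internal node u) is invariant under M: M S^u ⊆ S^u. -/
/-- The split space `S^u`: the span of the wavelet modes `ψ_{u,r}`, `r = 1,…,h(u)`. -/
noncomputable def splitSpace (L : ℕ) (u : BTNode L) : Submodule ℝ (BTNode L → ℝ) :=
  Submodule.span ℝ
    {v : BTNode L → ℝ |
      ∃ r : ℕ, 1 ≤ r ∧ r ≤ L - BTNode.depth u ∧ v = BTNode.waveletMode u r}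

/-!
`S^u` consists of the functions `side u · (g ∘ depth)`, where `side u` is `±1` on the proper
descendants of `u` according to the child of `u` they lie below, and `0` elsewhere. XOR-ing
every node index with the matching prefix of a fixed leaf index is a tree automorphism, hence
commutes with `M`. Those automorphisms that fix the level of `u` multiply `side u` by a global
sign and act transitively on each level below `u`, so `M x` keeps the shape
`side u · (h ∘ depth)` on the proper descendants of `u`. At a node `i` off them, flipping the
bit of level `depth u + 1` negates `x` without changing any distance from `i` to a node below
`u`, so `(M x) i = 0`.
-/

open Finset

theorem Nat.findGreatest_congr {P Q : ℕ → Prop} [DecidablePred P] [DecidablePred Q] {n : ℕ}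
    (h : ∀ k ≤ n, P k ↔ Q k) : Nat.findGreatest P n = Nat.findGreatest Q n := by
  induction n with
  | zero => rfl
  | succ n ih =>
    simp only [Nat.findGreatest_succ, h (n + 1) le_rfl]
    split_ifs
    · rfl
    · exact ih fun k hk => h k (hk.trans n.le_succ)

namespace BTNode

variable {L : ℕ}

theorem depth_le (n : BTNode L) : depth n ≤ L := Nat.lt_succ_iff.1 n.1.isLt

theorem anc_eq_anc_of_le {i j : BTNode L} {a b : ℕ} (h : anc i b = anc j b) (hab : a ≤ b)
    (hi : b ≤ depth i) (hj : b ≤ depth j) : anc i a = anc j a := by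
  have key : ∀ n : BTNode L, b ≤ depth n → anc n a = anc n b / 2 ^ (b - a) := by
    intro n hn
    rw [anc, anc, Nat.div_div_eq_div_mul, ← pow_add]
    congr 2
    omega
  rw [key i hi, key j hj, h]

theorem dist_congr {i j i' j' : BTNode L} (hi : depth i' = depth i) (hj : depth j' = depth j)
    (h : ∀ b ≤ min (depth i) (depth j), anc i' b = anc j' b ↔ anc i b = anc j b) :
    dist i' j' = dist i j := by
  unfold dist lcaDepth
  rw [hi, hj, Nat.findGreatest_congr h]

theorem div_two_pow_sub_lt (a : Fin (2 ^ L)) {ℓ : ℕ} (hℓ : ℓ ≤ L) :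
    (a : ℕ) / 2 ^ (L - ℓ) < 2 ^ ℓ := by
  rw [Nat.div_lt_iff_lt_mul (Nat.two_pow_pos _), ← pow_add, Nat.add_sub_cancel' hℓ]
  exact a.isLt

/-- Prefixes of one leaf index `a` are compatible across levels, which makes this a tree
automorphism. -/
def xorNode (a : Fin (2 ^ L)) (n : BTNode L) : BTNode L :=
  ⟨n.1, ⟨(n.2 : ℕ) ^^^ (a : ℕ) / 2 ^ (L - depth n),
    Nat.xor_lt_two_pow n.2.isLt (div_two_pow_sub_lt a (depth_le n))⟩⟩

variable {a : Fin (2 ^ L)}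

@[simp]
theorem depth_xorNode (n : BTNode L) : depth (xorNode a n) = depth n := rfl

theorem anc_xorNode {n : BTNode L} {b : ℕ} (hb : b ≤ depth n) :
    anc (xorNode a n) b = anc n b ^^^ (a : ℕ) / 2 ^ (L - b) := by
  show ((n.2 : ℕ) ^^^ (a : ℕ) / 2 ^ (L - depth n)) / 2 ^ (depth n - b) = _
  rw [Nat.xor_div_two_pow, Nat.div_div_eq_div_mul, ← pow_add]
  have := depth_le n
  congr 3
  omega

theorem xorNode_involutive (a : Fin (2 ^ L)) : Function.Involutive (xorNode a) := by
  rintro ⟨ℓ, k⟩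
  simp [xorNode, depth]

theorem dist_xorNode (i j : BTNode L) : dist (xorNode a i) (xorNode a j) = dist i j :=
  dist_congr rfl rfl fun b hb => by
    rw [anc_xorNode (hb.trans (min_le_left _ _)), anc_xorNode (hb.trans (min_le_right _ _)),
      Nat.xor_left_inj]

theorem sum_dist_xorNode_mul (f : ℕ → ℝ) (x : BTNode L → ℝ) (i : BTNode L) :
    ∑ j, f (dist (xorNode a i) j) * x j = ∑ j, f (dist i j) * x (xorNode a j) := by
  rw [← Equiv.sum_comp (xorNode_involutive a).toPerm]
  simp only [Function.Involutive.coe_toPerm, dist_xorNode]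

theorem exists_xorNode_eq {n n' : BTNode L} {b : ℕ} (hd : depth n = depth n')
    (hb : b ≤ depth n) (h : anc n b = anc n' b) :
    ∃ a : Fin (2 ^ L), (a : ℕ) / 2 ^ (L - b) = 0 ∧ xorNode a n = n' := by
  obtain ⟨ℓ, k⟩ := n
  obtain ⟨ℓ', k'⟩ := n'
  obtain rfl : ℓ = ℓ' := Fin.ext hd
  have hlt : ((k : ℕ) ^^^ k') * 2 ^ (L - ℓ) < 2 ^ L := by
    calc ((k : ℕ) ^^^ k') * 2 ^ (L - ℓ) < 2 ^ (ℓ : ℕ) * 2 ^ (L - ℓ) :=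
          Nat.mul_lt_mul_of_pos_right (Nat.xor_lt_two_pow k.isLt k'.isLt) (Nat.two_pow_pos _)
      _ = 2 ^ L := by rw [← pow_add, Nat.add_sub_cancel' (Nat.lt_succ_iff.1 ℓ.isLt)]
  have hmap : xorNode ⟨_, hlt⟩ ⟨ℓ, k⟩ = ⟨ℓ, k'⟩ := by
    simp [xorNode, depth, Nat.mul_div_cancel _ (Nat.two_pow_pos _)]
  refine ⟨⟨_, hlt⟩, ?_, hmap⟩
  have hanc := anc_xorNode (a := ⟨_, hlt⟩) hb
  rw [hmap, ← h] at hanc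
  simpa using hanc.symm

def IsProperAncestor (u n : BTNode L) : Prop :=
  depth u < depth n ∧ anc n (depth u) = u.2

instance (u n : BTNode L) : Decidable (IsProperAncestor u n) :=
  inferInstanceAs (Decidable (_ ∧ _))

theorem IsProperAncestor.anc_ne_anc {u i j : BTNode L} (hj : IsProperAncestor u j)
    (hi : ¬IsProperAncestor u i) {b : ℕ} (hb : depth u < b) (hbi : b ≤ depth i)
    (hbj : b ≤ depth j) : anc i b ≠ anc j b := fun h =>
  hi ⟨hb.trans_le hbi, (anc_eq_anc_of_le h hb.le hbi hbj).trans hj.2⟩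

variable {u : BTNode L}

theorem isProperAncestor_xorNode_iff (ha : (a : ℕ) / 2 ^ (L - depth u) = 0) (n : BTNode L) :
    IsProperAncestor u (xorNode a n) ↔ IsProperAncestor u n := by
  unfold IsProperAncestor
  rw [depth_xorNode]
  exact and_congr_right fun h => by rw [anc_xorNode h.le, ha, Nat.xor_zero]

theorem dist_xorNode_right (ha : (a : ℕ) / 2 ^ (L - depth u) = 0) {i j : BTNode L}
    (hi : ¬IsProperAncestor u i) (hj : IsProperAncestor u j) :
    dist i (xorNode a j) = dist i j := by
  have hj' := (isProperAncestor_xorNode_iff ha j).2 hj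
  refine dist_congr rfl rfl fun b hb => ?_
  have hbi := hb.trans (min_le_left _ _)
  have hbj := hb.trans (min_le_right _ _)
  rcases le_or_gt b (depth u) with hbu | hbu
  · have hmask : (a : ℕ) / 2 ^ (L - b) = 0 := Nat.eq_zero_of_le_zero <| ha ▸
      Nat.div_le_div_left (Nat.pow_le_pow_right two_pos (by omega)) (Nat.two_pow_pos _)
    rw [anc_xorNode hbj, hmask, Nat.xor_zero]
  · exact iff_of_false (hj'.anc_ne_anc hi hbu hbi hbj) (hj.anc_ne_anc hi hbu hbi hbj)

noncomputable def side (u n : BTNode L) : ℝ :=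
  if IsProperAncestor u n then (-1) ^ anc n (depth u + 1) else 0

theorem side_mul_self {n : BTNode L} (hn : IsProperAncestor u n) : side u n * side u n = 1 := by
  rw [side, if_pos hn, ← mul_pow]
  norm_num

theorem exists_eq_side_mul {y : BTNode L → ℝ}
    (hzero : ∀ n, ¬IsProperAncestor u n → y n = 0)
    (hlevel : ∀ n n', IsProperAncestor u n → IsProperAncestor u n' → depth n = depth n' →
      side u n * y n = side u n' * y n') :
    ∃ g : ℕ → ℝ, y = fun n => side u n * g (depth n) := by
  classical
  refine ⟨fun ℓ => if h : ∃ m, IsProperAncestor u m ∧ depth m = ℓ then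
    side u h.choose * y h.choose else 0, funext fun n => ?_⟩
  by_cases hn : IsProperAncestor u n
  · have h : ∃ m, IsProperAncestor u m ∧ depth m = depth n := ⟨n, hn, rfl⟩
    beta_reduce
    rw [dif_pos h, ← hlevel n _ hn h.choose_spec.1 h.choose_spec.2.symm, ← mul_assoc,
      side_mul_self hn, one_mul]
  · simp [hzero n hn, side, hn]

theorem side_xorNode (ha : (a : ℕ) / 2 ^ (L - depth u) = 0) (n : BTNode L) :
    side u (xorNode a n) = (-1) ^ ((a : ℕ) / 2 ^ (L - (depth u + 1))) * side u n := by
  unfold side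
  simp only [isProperAncestor_xorNode_iff ha]
  split_ifs with hn
  · rw [anc_xorNode hn.1, neg_one_pow_eq_pow_mod_two, Nat.xor_mod_two_eq,
      ← neg_one_pow_eq_pow_mod_two, pow_add, mul_comm]
  · rw [mul_zero]

theorem waveletMode_eq_side_mul {r : ℕ} (hr : 1 ≤ r) (n : BTNode L) :
    waveletMode u r n = side u n * if depth n = depth u + r then (√2)⁻¹ ^ r else 0 := by
  unfold waveletMode side IsProperAncestor
  simp only [neg_one_pow_eq_ite, Nat.even_iff]
  split_ifs <;> first | (exfalso; omega) | ring

end BTNode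

open BTNode

theorem mem_splitSpace_iff {L : ℕ} {u : BTNode L} {x : BTNode L → ℝ} :
    x ∈ splitSpace L u ↔ ∃ g : ℕ → ℝ, x = fun n => side u n * g (depth n) := by
  constructor
  · intro hx
    induction hx using Submodule.span_induction with
    | mem v hv =>
      obtain ⟨r, hr, -, rfl⟩ := hv
      exact ⟨fun ℓ => if ℓ = depth u + r then (√2)⁻¹ ^ r else 0,
        funext (waveletMode_eq_side_mul hr)⟩
    | zero => exact ⟨0, funext fun n => by simp⟩
    | add _ _ _ _ hx hy =>
      obtain ⟨g, rfl⟩ := hx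
      obtain ⟨h, rfl⟩ := hy
      exact ⟨g + h, by ext; simp [mul_add]⟩
    | smul c _ _ hx =>
      obtain ⟨g, rfl⟩ := hx
      exact ⟨c • g, funext fun n => by simp only [Pi.smul_apply, smul_eq_mul]; ring⟩
  · rintro ⟨g, rfl⟩
    have hsum : (fun n => side u n * g (depth n)) = ∑ r ∈ Icc 1 (L - depth u),
        (g (depth u + r) * √2 ^ r) • waveletMode u r := by
      ext n
      simp only [Finset.sum_apply, Pi.smul_apply, smul_eq_mul]
      rw [sum_congr rfl fun r hr => by rw [waveletMode_eq_side_mul (mem_Icc.1 hr).1]]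
      by_cases hn : IsProperAncestor u n
      · have hlt := hn.1
        have hmem : depth n - depth u ∈ Icc 1 (L - depth u) :=
          mem_Icc.2 ⟨by omega, Nat.sub_le_sub_right (depth_le n) _⟩
        rw [sum_eq_single_of_mem _ hmem fun r _ hr => by
            rw [if_neg (by omega), mul_zero, mul_zero],
          if_pos (by omega), Nat.add_sub_cancel' hlt.le, inv_pow]
        field_simp
      · simp [side, hn]
    rw [hsum]
    exact Submodule.sum_mem _ fun r hr => Submodule.smul_mem _ _
      (Submodule.subset_span ⟨r, (mem_Icc.1 hr).1, (mem_Icc.1 hr).2, rfl⟩)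

section Kernel

variable {L : ℕ} (f : ℕ → ℝ) (g : ℕ → ℝ) {u : BTNode L}

theorem sum_dist_xorNode_mul_side (a : Fin (2 ^ L)) (ha : (a : ℕ) / 2 ^ (L - depth u) = 0)
    (i : BTNode L) :
    ∑ j, f (dist (xorNode a i) j) * (side u j * g (depth j)) =
      (-1) ^ ((a : ℕ) / 2 ^ (L - (depth u + 1))) *
        ∑ j, f (dist i j) * (side u j * g (depth j)) := by
  rw [sum_dist_xorNode_mul, mul_sum]
  refine sum_congr rfl fun j _ => ?_
  rw [side_xorNode ha, depth_xorNode]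
  ring

theorem sum_dist_mul_side_eq_zero (hu : depth u < L) {i : BTNode L}
    (hi : ¬IsProperAncestor u i) : ∑ j, f (dist i j) * (side u j * g (depth j)) = 0 := by
  let swap : Fin (2 ^ L) :=
    ⟨2 ^ (L - (depth u + 1)), Nat.pow_lt_pow_right one_lt_two (by omega)⟩
  have hswap : (swap : ℕ) / 2 ^ (L - depth u) = 0 :=
    Nat.div_eq_of_lt (Nat.pow_lt_pow_right one_lt_two (by omega))
  have hterm : ∀ j, f (dist i (xorNode swap j)) *
      (side u (xorNode swap j) * g (depth (xorNode swap j))) =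
        -(f (dist i j) * (side u j * g (depth j))) := by
    intro j
    rw [side_xorNode hswap, depth_xorNode, Nat.div_self (Nat.two_pow_pos _), pow_one]
    by_cases hj : IsProperAncestor u j
    · rw [dist_xorNode_right hswap hi hj]
      ring
    · simp [side, hj]
  have := Equiv.sum_comp (xorNode_involutive swap).toPerm
    fun j => f (dist i j) * (side u j * g (depth j))
  simp only [Function.Involutive.coe_toPerm, hterm, sum_neg_distrib] at this
  linarith

end Kernel

/-- for `M_{ij} = f(dist(i,j))` on the full binary tree of depth `L` and
arbitrary `f : ℕ → ℝ`, every split space `S^u` is invariant under `M`: `M S^u ⊆ S^u`. -/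
theorem distance_kernel_preserves_split_space (L : ℕ) (f : ℕ → ℝ)
    (u : BTNode L) (hu : BTNode.depth u < L) :
    ∀ x ∈ splitSpace L u,
      (fun i => ∑ j : BTNode L, f (BTNode.dist i j) * x j) ∈ splitSpace L u := by
  intro x hx
  obtain ⟨g, rfl⟩ := mem_splitSpace_iff.1 hx
  refine mem_splitSpace_iff.2 <|
    exists_eq_side_mul (fun i hi => sum_dist_mul_side_eq_zero f g hu hi) ?_
  intro n n' hn hn' hd
  obtain ⟨a, ha, rfl⟩ := exists_xorNode_eq hd hn.1.le (hn.2.trans hn'.2.symm)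
  rw [side_xorNode ha, sum_dist_xorNode_mul_side f g a ha]
  rcases neg_one_pow_eq_or ℝ ((a : ℕ) / 2 ^ (L - (depth u + 1))) with h | h <;> rw [h] <;> ring
end

section
/- For the split block A^{(h)} with entries A^{(h)}_{r,s} = 2^{-(r+s)/2}[ -2^{r+s-1} f(r+s) + Σ_{a=1}^{min(r,s)-1} 2^{r+s-a-1} f(r+s-2a) + 2^{max(r,s)} f(|r-s|) ], if f is strictly decreasing then every entry A^{(h)}_{r,s} is strictly positive. -/
/-!
The weights `2^(r+s-a-1)` (`1 ≤ a < min r s`) and `2^(max r s)` of the positive terms add up to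
`2^(r+s-1)`, the weight of the negative term, and every positive term evaluates `f` at a point
`< r + s`. Since `f` is strictly decreasing, the bracket is a positive combination of the
differences `f d - f (r + s)`, the last one of which is strictly positive.
-/

open Finset

theorem sum_Icc_two_pow_add_two_pow {R : Type*} [Semiring R] (k m : ℕ) :
    ∑ a ∈ Icc 1 k, (2 : R) ^ (m + k - a) + 2 ^ m = 2 ^ (m + k) := by
  induction k with
  | zero => simp
  | succ k ih =>
    have hshift : ∀ a ∈ Icc 1 k, (2 : R) ^ (m + (k + 1) - a) = 2 * 2 ^ (m + k - a) :=
      fun a ha => by rw [← pow_succ']; congr 1; rw [mem_Icc] at ha; omega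
    rw [sum_Icc_succ_top (by omega), sum_congr rfl hshift, ← mul_sum,
      show m + (k + 1) - (k + 1) = m by omega, add_assoc, ← two_mul, ← mul_add, ih, ← pow_succ',
      add_assoc]

theorem neg_sum_add_mul_add_sum_mul_add_mul_pos {ι R : Type*} [CommRing R] [LinearOrder R]
    [IsStrictOrderedRing R] (s : Finset ι) (w x : ι → R) (w₀ x₀ y : R) (hw : ∀ i ∈ s, 0 ≤ w i) (hx : ∀ i ∈ s, y ≤ x i) (hw₀ : 0 < w₀) (hx₀ : y < x₀) :
    0 < -(∑ i ∈ s, w i + w₀) * y + ∑ i ∈ s, w i * x i + w₀ * x₀ := by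
  have hsum : ∑ i ∈ s, w i * y ≤ ∑ i ∈ s, w i * x i :=
    sum_le_sum fun i hi => mul_le_mul_of_nonneg_left (hx i hi) (hw i hi)
  have hlast : w₀ * y < w₀ * x₀ := mul_lt_mul_of_pos_left hx₀ hw₀
  rw [← sum_mul] at hsum
  linarith

theorem split_block_entries_positive_general (r s : ℕ) (hr : 1 ≤ r)
    (hs : 1 ≤ s) (f : ℕ → ℝ) (hf : StrictAnti f) :
    0 < ((Real.sqrt 2)⁻¹) ^ (r + s) *
      (-(2 : ℝ) ^ (r + s - 1) * f (r + s)
        + ∑ a ∈ Finset.Icc 1 (min r s - 1), (2 : ℝ) ^ (r + s - a - 1) * f (r + s - 2 * a)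
        + (2 : ℝ) ^ max r s * f (Nat.dist r s)) := by
  have hweights : (2 : ℝ) ^ (r + s - 1) =
      ∑ a ∈ Icc 1 (min r s - 1), (2 : ℝ) ^ (r + s - a - 1) + 2 ^ max r s := by
    rw [show r + s - 1 = max r s + (min r s - 1) by omega, ← sum_Icc_two_pow_add_two_pow]
    congr 1
    exact sum_congr rfl fun a _ => by rw [show max r s + (min r s - 1) - a = r + s - a - 1 by omega]
  have hdist : Nat.dist r s < r + s := by
    rw [Nat.dist_eq_max_sub_min]
    omega
  refine mul_pos (by positivity) ?_
  rw [hweights]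
  exact neg_sum_add_mul_add_sum_mul_add_mul_pos _ _ _ _ _ _ (fun _ _ => by positivity)
    (fun _ _ => hf.antitone (Nat.sub_le _ _)) (by positivity) (hf hdist)

/-- for the split block
`A^{(h)}_{r,s} = 2^{-(r+s)/2} [ -2^{r+s-1} f(r+s) + Σ_{a=1}^{min(r,s)-1} 2^{r+s-a-1} f(r+s-2a)
+ 2^{max(r,s)} f(|r-s|) ]` with `1 ≤ r, s ≤ h`, if `f : ℕ → ℝ` is strictly decreasing then
every entry is strictly positive. -/
theorem split_block_entries_positive (h r s : ℕ) (hr : 1 ≤ r) (hrh : r ≤ h)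
    (hs : 1 ≤ s) (hsh : s ≤ h) (f : ℕ → ℝ) (hf : StrictAnti f) :
    0 < ((Real.sqrt 2)⁻¹) ^ (r + s) *
      (-(2 : ℝ) ^ (r + s - 1) * f (r + s)
        + ∑ a ∈ Finset.Icc 1 (min r s - 1), (2 : ℝ) ^ (r + s - a - 1) * f (r + s - 2 * a)
        + (2 : ℝ) ^ max r s * f (Nat.dist r s)) :=
  split_block_entries_positive_general r s hr hs f hf
end

section
/- The exponential tree kernel is positive semidefinite: for any finite tree T with graph distance dist and any β > 0, the matrix K with entries K_{ij} = e^{-β·dist(i,j)} is positive semidefinite. -/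
/-!
In a tree, the path from `u` to `v` crosses exactly the edges `e` that separate `u` from `v`
in `G - e`, so `exp (-β · dist u v)` is the product over all edges `e` of
`if u, v are joined in G - e then 1 else exp (-β)`. Each factor is the nonnegative combination
`q J + (1 - q) S_e` of the all-ones matrix and the indicator matrix of the components of
`G - e`, both Gram matrices, and the Schur product theorem takes care of the product.
-/

open Finset Matrix SimpleGraph

namespace Matrix

variable {n : Type*} [Fintype n]

theorem posSemidef_ite_eq_one_zero {α R : Type*} [CommRing R] [PartialOrder R] [StarRing R]
    [StarOrderedRing R] [Fintype α] [DecidableEq α] (f : n → α) :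
    (of fun i j => if f i = f j then (1 : R) else 0).PosSemidef := by
  let B : Matrix α n R := of fun a i => if f i = a then 1 else 0
  convert posSemidef_conjTranspose_mul_self B using 1
  ext i j
  by_cases h : f i = f j <;> simp [B, mul_apply, eq_comm, h]

theorem posSemidef_of_const_one {R : Type*} [CommRing R] [PartialOrder R] [StarRing R]
    [StarOrderedRing R] : (of fun _ _ : n => (1 : R)).PosSemidef := by
  simpa using posSemidef_ite_eq_one_zero (R := R) fun _ : n => ()

theorem posSemidef_ite_eq_one_const {α : Type*} [Fintype α] [DecidableEq α] (f : n → α)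
    {q : ℝ} (hq₀ : 0 ≤ q) (hq₁ : q ≤ 1) :
    (of fun i j => if f i = f j then 1 else q).PosSemidef := by
  have hsplit : (of fun i j => if f i = f j then 1 else q) =
      q • (of fun _ _ : n => (1 : ℝ)) + (1 - q) • of fun i j => if f i = f j then 1 else 0 := by
    ext i j
    by_cases h : f i = f j <;> simp [h]
  rw [hsplit]
  exact (posSemidef_of_const_one.smul hq₀).add
    ((posSemidef_ite_eq_one_zero f).smul (sub_nonneg.mpr hq₁))

open scoped ComplexOrder in
theorem posSemidef_prod_hadamard {𝕜 ι : Type*} [RCLike 𝕜] (s : Finset ι)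
    (A : ι → Matrix n n 𝕜) (hA : ∀ k ∈ s, (A k).PosSemidef) :
    (of fun i j => ∏ k ∈ s, A k i j).PosSemidef := by
  classical
  induction s using Finset.induction_on with
  | empty => simpa using posSemidef_of_const_one
  | insert k s hk ih =>
    simp_rw [prod_insert hk]
    exact (hA k (mem_insert_self k s)).hadamard (ih fun l hl => hA l (mem_insert_of_mem hl))

end Matrix

namespace SimpleGraph

variable {V : Type*} {G : SimpleGraph V}

theorem IsAcyclic.mem_edges_iff_not_reachable_deleteEdges (hG : G.IsAcyclic) {u v : V}
    {p : G.Walk u v} (hp : p.IsPath) (e : Sym2 V) :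
    e ∈ p.edges ↔ ¬(G.deleteEdges {e}).Reachable u v := by
  classical
  refine ⟨fun he ⟨w⟩ => ?_, fun h => by_contra fun he => h (p.toDeleteEdge e he).reachable⟩
  -- a path of `G - e` is also a path of `G`, hence it is `p`, which would then avoid `e`
  have hpath : (w.bypass.mapLe (G.deleteEdges_le {e})).IsPath := w.bypass_isPath.mapLe _
  have hp_eq : p = w.bypass.mapLe (G.deleteEdges_le {e}) :=
    congrArg Subtype.val ((hG.subsingleton_path u v).elim ⟨p, hp⟩ ⟨_, hpath⟩)
  rw [hp_eq, Walk.edges_mapLe_eq_edges] at he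
  simpa using w.bypass.edges_subset_edgeSet he

theorem IsAcyclic.dist_eq_card_filter_not_reachable_deleteEdges [Fintype G.edgeSet]
    (hG : G.IsAcyclic) {u v : V} [∀ e : Sym2 V, Decidable ((G.deleteEdges {e}).Reachable u v)]
    (huv : G.Reachable u v) :
    G.dist u v = #{e ∈ G.edgeFinset | ¬(G.deleteEdges {e}).Reachable u v} := by
  classical
  obtain ⟨p, hp, hlen⟩ := huv.exists_path_of_dist
  have hedges : {e ∈ G.edgeFinset | ¬(G.deleteEdges {e}).Reachable u v} = p.edges.toFinset := by
    ext e
    simp only [mem_filter, mem_edgeFinset, List.mem_toFinset,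
      ← hG.mem_edges_iff_not_reachable_deleteEdges hp]
    exact ⟨And.right, fun he => ⟨p.edges_subset_edgeSet he, he⟩⟩
  rw [hedges, List.toFinset_card_of_nodup hp.edges_nodup, Walk.length_edges, hlen]

end SimpleGraph

/-- the exponential tree kernel is positive semidefinite.  For any finite
tree `G` (connected acyclic simple graph) with graph distance `dist` and any `β > 0`,
the matrix `K_{ij} = e^{-β·dist(i,j)}` is positive semidefinite. -/
theorem exponential_tree_kernel_posSemidef {V : Type*} [Fintype V]
    (G : SimpleGraph V) (hG : G.IsTree) (β : ℝ) (hβ : 0 < β)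
    (K : Matrix V V ℝ) (hK : ∀ i j : V, K i j = Real.exp (-β * (G.dist i j : ℝ))) :
    K.PosSemidef := by
  classical
  have hK_prod : K = of fun u v =>
      ∏ e ∈ G.edgeFinset, if (G.deleteEdges {e}).Reachable u v then 1 else Real.exp (-β) := by
    ext u v
    rw [hK, hG.isAcyclic.dist_eq_card_filter_not_reachable_deleteEdges (hG.connected u v),
      mul_comm, Real.exp_nat_mul, of_apply, prod_ite, prod_const_one, one_mul, prod_const]
  rw [hK_prod]
  refine posSemidef_prod_hadamard _
    (fun e => of fun u v => if (G.deleteEdges {e}).Reachable u v then 1 else Real.exp (-β))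
    fun e _ => ?_
  simpa only [ConnectedComponent.eq] using
    posSemidef_ite_eq_one_const (G.deleteEdges {e}).connectedComponentMk (Real.exp_nonneg _)
      (Real.exp_le_one_iff.mpr (neg_nonpos.mpr hβ.le))
end
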